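/- Let G be a 2-connected graph with no induced subgraph isomorphic to a theta or to a theta+, and let {u,v} be a 2-cutset of G. Then G − {u,v} has exactly two connected components. -/

import Mathlib

open SimpleGraph

universe u

variable {V : Type u}

/-- A graph is 2-connected if it has at least three vertices, is connected,
and deleting any single vertex leaves a connected graph. -/
def TwoConnected (G : SimpleGraph V) : Prop :=
  3 ≤ Nat.card V ∧ G.Connected ∧ ∀ v : V, (G.induce ({v}ᶜ : Set V)).Connected

/-- A graph is Hamiltonian if it has a Hamiltonian cycle. -/
def IsHamiltonianGraph (G : SimpleGraph V) : Prop :=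
  ∃ (a : V) (p : G.Walk a a), p.IsCycle ∧ ∀ x : V, x ∈ p.support

/-- An HC-obstruction: 2-connected, non-Hamiltonian, and every proper induced
subgraph is not 2-connected or Hamiltonian. -/
def IsHCObstruction (G : SimpleGraph V) : Prop :=
  TwoConnected G ∧ ¬ IsHamiltonianGraph G ∧
    ∀ X : Set V, X ≠ Set.univ →
      ¬ TwoConnected (G.induce X) ∨ IsHamiltonianGraph (G.induce X)

/-- A theta: the union of three internally vertex-disjoint paths of length at
least two between two distinct vertices `a`, `b`, with no other edges. -/
def IsTheta (G : SimpleGraph V) : Prop :=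
  ∃ (a b : V) (P₁ P₂ P₃ : G.Walk a b),
    a ≠ b ∧
    P₁.IsPath ∧ P₂.IsPath ∧ P₃.IsPath ∧
    2 ≤ P₁.length ∧ 2 ≤ P₂.length ∧ 2 ≤ P₃.length ∧
    (∀ x, x ∈ P₁.support → x ∈ P₂.support → x = a ∨ x = b) ∧
    (∀ x, x ∈ P₁.support → x ∈ P₃.support → x = a ∨ x = b) ∧
    (∀ x, x ∈ P₂.support → x ∈ P₃.support → x = a ∨ x = b) ∧
    (∀ x : V, x ∈ P₁.support ∨ x ∈ P₂.support ∨ x ∈ P₃.support) ∧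
    (∀ e, e ∈ G.edgeSet → e ∈ P₁.edges ∨ e ∈ P₂.edges ∨ e ∈ P₃.edges)

/-- A theta⁺: a theta together with the edge joining its two endpoints. -/
def IsThetaPlus (G : SimpleGraph V) : Prop :=
  ∃ (a b : V) (P₁ P₂ P₃ : G.Walk a b),
    a ≠ b ∧ G.Adj a b ∧
    P₁.IsPath ∧ P₂.IsPath ∧ P₃.IsPath ∧
    2 ≤ P₁.length ∧ 2 ≤ P₂.length ∧ 2 ≤ P₃.length ∧
    (∀ x, x ∈ P₁.support → x ∈ P₂.support → x = a ∨ x = b) ∧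
    (∀ x, x ∈ P₁.support → x ∈ P₃.support → x = a ∨ x = b) ∧
    (∀ x, x ∈ P₂.support → x ∈ P₃.support → x = a ∨ x = b) ∧
    (∀ x : V, x ∈ P₁.support ∨ x ∈ P₂.support ∨ x ∈ P₃.support) ∧
    (∀ e, e ∈ G.edgeSet →
      e = s(a, b) ∨ e ∈ P₁.edges ∨ e ∈ P₂.edges ∨ e ∈ P₃.edges)

/-- A prism: two vertex-disjoint triangles joined by three pairwise
vertex-disjoint paths of length at least two, with no other edges. -/
def IsPrism (G : SimpleGraph V) : Prop :=
  ∃ (k₁ k₂ k₃ l₁ l₂ l₃ : V) (P₁ : G.Walk k₁ l₁) (P₂ : G.Walk k₂ l₂) (P₃ : G.Walk k₃ l₃),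
    G.Adj k₁ k₂ ∧ G.Adj k₂ k₃ ∧ G.Adj k₁ k₃ ∧
    G.Adj l₁ l₂ ∧ G.Adj l₂ l₃ ∧ G.Adj l₁ l₃ ∧
    P₁.IsPath ∧ P₂.IsPath ∧ P₃.IsPath ∧
    2 ≤ P₁.length ∧ 2 ≤ P₂.length ∧ 2 ≤ P₃.length ∧
    (∀ x, x ∈ P₁.support → x ∉ P₂.support) ∧
    (∀ x, x ∈ P₁.support → x ∉ P₃.support) ∧
    (∀ x, x ∈ P₂.support → x ∉ P₃.support) ∧
    (∀ x : V, x ∈ P₁.support ∨ x ∈ P₂.support ∨ x ∈ P₃.support) ∧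
    (∀ e, e ∈ G.edgeSet →
      e = s(k₁, k₂) ∨ e = s(k₂, k₃) ∨ e = s(k₁, k₃) ∨
      e = s(l₁, l₂) ∨ e = s(l₂, l₃) ∨ e = s(l₁, l₃) ∨
      e ∈ P₁.edges ∨ e ∈ P₂.edges ∨ e ∈ P₃.edges)

/-- A prism⁺: a prism together with, for each index in a nonempty subset of
`{1,2,3}`, the edge joining the ends `kᵢ`, `lᵢ` of the corresponding path. -/
def IsPrismPlus (G : SimpleGraph V) : Prop :=
  ∃ (k₁ k₂ k₃ l₁ l₂ l₃ : V) (P₁ : G.Walk k₁ l₁) (P₂ : G.Walk k₂ l₂) (P₃ : G.Walk k₃ l₃)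
    (b₁ b₂ b₃ : Prop),
    (b₁ ∨ b₂ ∨ b₃) ∧
    (b₁ → G.Adj k₁ l₁) ∧ (b₂ → G.Adj k₂ l₂) ∧ (b₃ → G.Adj k₃ l₃) ∧
    G.Adj k₁ k₂ ∧ G.Adj k₂ k₃ ∧ G.Adj k₁ k₃ ∧
    G.Adj l₁ l₂ ∧ G.Adj l₂ l₃ ∧ G.Adj l₁ l₃ ∧
    P₁.IsPath ∧ P₂.IsPath ∧ P₃.IsPath ∧
    2 ≤ P₁.length ∧ 2 ≤ P₂.length ∧ 2 ≤ P₃.length ∧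
    (∀ x, x ∈ P₁.support → x ∉ P₂.support) ∧
    (∀ x, x ∈ P₁.support → x ∉ P₃.support) ∧
    (∀ x, x ∈ P₂.support → x ∉ P₃.support) ∧
    (∀ x : V, x ∈ P₁.support ∨ x ∈ P₂.support ∨ x ∈ P₃.support) ∧
    (∀ e, e ∈ G.edgeSet →
      e = s(k₁, k₂) ∨ e = s(k₂, k₃) ∨ e = s(k₁, k₃) ∨
      e = s(l₁, l₂) ∨ e = s(l₂, l₃) ∨ e = s(l₁, l₃) ∨
      (b₁ ∧ e = s(k₁, l₁)) ∨ (b₂ ∧ e = s(k₂, l₂)) ∨ (b₃ ∧ e = s(k₃, l₃)) ∨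
      e ∈ P₁.edges ∨ e ∈ P₂.edges ∨ e ∈ P₃.edges)

/-- A pyramid: a triangle `{k₁,k₂,k₃}` and an apex `l`, joined by three
internally vertex-disjoint paths of length at least two, with no other edges. -/
def IsPyramid (G : SimpleGraph V) : Prop :=
  ∃ (k₁ k₂ k₃ l : V) (P₁ : G.Walk k₁ l) (P₂ : G.Walk k₂ l) (P₃ : G.Walk k₃ l),
    G.Adj k₁ k₂ ∧ G.Adj k₂ k₃ ∧ G.Adj k₁ k₃ ∧
    P₁.IsPath ∧ P₂.IsPath ∧ P₃.IsPath ∧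
    2 ≤ P₁.length ∧ 2 ≤ P₂.length ∧ 2 ≤ P₃.length ∧
    (∀ x, x ∈ P₁.support → x ∈ P₂.support → x = l) ∧
    (∀ x, x ∈ P₁.support → x ∈ P₃.support → x = l) ∧
    (∀ x, x ∈ P₂.support → x ∈ P₃.support → x = l) ∧
    (∀ x : V, x ∈ P₁.support ∨ x ∈ P₂.support ∨ x ∈ P₃.support) ∧
    (∀ e, e ∈ G.edgeSet →
      e = s(k₁, k₂) ∨ e = s(k₂, k₃) ∨ e = s(k₁, k₃) ∨
      e ∈ P₁.edges ∨ e ∈ P₂.edges ∨ e ∈ P₃.edges)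

/-- A pyramid⁺: a pyramid together with, for each index in a nonempty subset of
`{1,2,3}`, the edge joining the ends `kᵢ`, `l` of the corresponding path. -/
def IsPyramidPlus (G : SimpleGraph V) : Prop :=
  ∃ (k₁ k₂ k₃ l : V) (P₁ : G.Walk k₁ l) (P₂ : G.Walk k₂ l) (P₃ : G.Walk k₃ l)
    (b₁ b₂ b₃ : Prop),
    (b₁ ∨ b₂ ∨ b₃) ∧
    (b₁ → G.Adj k₁ l) ∧ (b₂ → G.Adj k₂ l) ∧ (b₃ → G.Adj k₃ l) ∧
    G.Adj k₁ k₂ ∧ G.Adj k₂ k₃ ∧ G.Adj k₁ k₃ ∧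
    P₁.IsPath ∧ P₂.IsPath ∧ P₃.IsPath ∧
    2 ≤ P₁.length ∧ 2 ≤ P₂.length ∧ 2 ≤ P₃.length ∧
    (∀ x, x ∈ P₁.support → x ∈ P₂.support → x = l) ∧
    (∀ x, x ∈ P₁.support → x ∈ P₃.support → x = l) ∧
    (∀ x, x ∈ P₂.support → x ∈ P₃.support → x = l) ∧
    (∀ x : V, x ∈ P₁.support ∨ x ∈ P₂.support ∨ x ∈ P₃.support) ∧
    (∀ e, e ∈ G.edgeSet →
      e = s(k₁, k₂) ∨ e = s(k₂, k₃) ∨ e = s(k₁, k₃) ∨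
      (b₁ ∧ e = s(k₁, l)) ∨ (b₂ ∧ e = s(k₂, l)) ∨ (b₃ ∧ e = s(k₃, l)) ∨
      e ∈ P₁.edges ∨ e ∈ P₂.edges ∨ e ∈ P₃.edges)

/-- A 3-path-configuration: a prism, a pyramid, a theta, a prism⁺, a
pyramid⁺, or a theta⁺. -/
def IsThreePathConfig (G : SimpleGraph V) : Prop :=
  IsPrism G ∨ IsPyramid G ∨ IsTheta G ∨ IsPrismPlus G ∨ IsPyramidPlus G ∨ IsThetaPlus G

/-- A wheel: a cycle together with one extra vertex having at least three
neighbors on the cycle, and no other edges. -/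
def IsWheel (G : SimpleGraph V) : Prop :=
  ∃ (c u : V) (w : G.Walk u u), w.IsCycle ∧ c ∉ w.support ∧
    (∀ x : V, x = c ∨ x ∈ w.support) ∧
    3 ≤ {x | x ∈ w.support ∧ G.Adj c x}.ncard ∧
    (∀ e, e ∈ G.edgeSet → e ∈ w.edges ∨ ∃ x ∈ w.support, e = s(c, x))

/-- A graph is wheel-free if no induced subgraph is a wheel. -/
def WheelFree (G : SimpleGraph V) : Prop :=
  ∀ X : Set V, ¬ IsWheel (G.induce X)

/-- A set of vertices is a cutset if deleting it leaves a disconnected graph. -/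
def IsCutset (G : SimpleGraph V) (X : Set V) : Prop :=
  ¬ (G.induce (Xᶜ : Set V)).Preconnected





namespace ThetaAux

/-- Chord lemma: on a shortest walk, any adjacency between support vertices
is an edge of the walk. -/
lemma chord {D : SimpleGraph V} :
    ∀ {a b : V} (p : D.Walk a b), p.length = D.dist a b →
      ∀ x y, x ∈ p.support → y ∈ p.support → D.Adj x y → s(x, y) ∈ p.edges := by
  classical
  intro a b p
  induction p with
  | nil =>
    intro _ x y hx hy hadj
    simp only [Walk.support_nil, List.mem_singleton] at hx hy
    subst hx; subst hy; exact absurd rfl hadj.ne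
  | @cons a c b h q ih =>
    intro hl x y hx hy hadj
    have hreach : D.Reachable c b := ⟨q⟩
    obtain ⟨q', _, hq'⟩ := hreach.exists_path_of_dist
    have hqlen : q.length = D.dist c b := by
      have h1 : D.dist c b ≤ q.length := SimpleGraph.dist_le q
      have h2 : D.dist a b ≤ (Walk.cons h q').length := SimpleGraph.dist_le _
      have h3 : (Walk.cons h q).length = D.dist a b := hl
      simp only [Walk.length_cons] at h2 h3
      omega
    -- helper: if z ∈ q.support and D.Adj a z then z = c
    have key : ∀ z, z ∈ q.support → D.Adj a z → z = c := by
      intro z hz haz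
      have hsplit := q.take_spec hz
      have hlen : (q.takeUntil z hz).length + (q.dropUntil z hz).length = q.length := by
        conv_rhs => rw [← hsplit]
        rw [Walk.length_append]
      have hnew : D.dist a b ≤ (Walk.cons haz (q.dropUntil z hz)).length := SimpleGraph.dist_le _
      have h3 : (Walk.cons h q).length = D.dist a b := hl
      simp only [Walk.length_cons] at hnew h3
      have : (q.takeUntil z hz).length = 0 := by omega
      exact (Walk.eq_of_length_eq_zero this).symm
    simp only [Walk.support_cons, List.mem_cons] at hx hy
    rcases hx with rfl | hx
    · rcases hy with rfl | hy
      · exact absurd rfl hadj.ne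
      · have : y = c := key y hy hadj
        subst this
        simp [Walk.edges_cons]
    · rcases hy with rfl | hy
      · have : x = c := key x hx hadj.symm
        subst this
        rw [Sym2.eq_swap]
        simp [Walk.edges_cons]
      · have := ih hqlen x y hx hy hadj
        simp [Walk.edges_cons, this]

/-- Lift a walk in a spanning subgraph `D ≤ G` whose support lies in `X`
to a walk in `G.induce X`. -/
def liftW (G D : SimpleGraph V) (hD : ∀ ⦃x y : V⦄, D.Adj x y → G.Adj x y) (X : Set V) :
    ∀ {a b : V} (p : D.Walk a b), (∀ x ∈ p.support, x ∈ X) →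
      ∀ (ha : a ∈ X) (hb : b ∈ X), (G.induce X).Walk ⟨a, ha⟩ ⟨b, hb⟩
  | _, _, Walk.nil, _, _, _ => Walk.nil
  | _, _, Walk.cons h q, hp, ha, hb =>
    Walk.cons (by exact hD h)
      (liftW G D hD X q (fun x hx => hp x (by simp [Walk.support_cons, hx]))
        (hp _ (by simp [Walk.support_cons, q.start_mem_support])) hb)

lemma liftW_length (G D : SimpleGraph V) (hD : ∀ ⦃x y : V⦄, D.Adj x y → G.Adj x y)
    (X : Set V) : ∀ {a b : V} (p : D.Walk a b) (hp : ∀ x ∈ p.support, x ∈ X)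
      (ha : a ∈ X) (hb : b ∈ X), (liftW G D hD X p hp ha hb).length = p.length
  | _, _, Walk.nil, _, _, _ => rfl
  | _, _, Walk.cons h q, hp, ha, hb => by
    simp only [liftW, Walk.length_cons]
    exact congrArg (· + 1) (liftW_length G D hD X q _ _ hb)

lemma liftW_support (G D : SimpleGraph V) (hD : ∀ ⦃x y : V⦄, D.Adj x y → G.Adj x y)
    (X : Set V) : ∀ {a b : V} (p : D.Walk a b) (hp : ∀ x ∈ p.support, x ∈ X)
      (ha : a ∈ X) (hb : b ∈ X),
      (liftW G D hD X p hp ha hb).support.map Subtype.val = p.support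
  | _, _, Walk.nil, _, _, _ => rfl
  | _, _, Walk.cons h q, hp, ha, hb => by
    simp only [liftW, Walk.support_cons, List.map_cons]
    exact congrArg (List.cons _) (liftW_support G D hD X q _ _ hb)

lemma liftW_edges (G D : SimpleGraph V) (hD : ∀ ⦃x y : V⦄, D.Adj x y → G.Adj x y)
    (X : Set V) : ∀ {a b : V} (p : D.Walk a b) (hp : ∀ x ∈ p.support, x ∈ X)
      (ha : a ∈ X) (hb : b ∈ X),
      (liftW G D hD X p hp ha hb).edges.map (Sym2.map Subtype.val) = p.edges
  | _, _, Walk.nil, _, _, _ => rfl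
  | _, _, Walk.cons h q, hp, ha, hb => by
    simp only [liftW, Walk.edges_cons, List.map_cons, Sym2.map_pair_eq]
    exact congrArg (List.cons _) (liftW_edges G D hD X q _ _ hb)

lemma liftW_mem_support (G D : SimpleGraph V) (hD : ∀ ⦃x y : V⦄, D.Adj x y → G.Adj x y)
    {X : Set V} {a b : V} (p : D.Walk a b) (hp : ∀ x ∈ p.support, x ∈ X)
    (ha : a ∈ X) (hb : b ∈ X) (z : X) :
    z ∈ (liftW G D hD X p hp ha hb).support ↔ z.1 ∈ p.support := by
  constructor
  · intro hz
    rw [← liftW_support G D hD X p hp ha hb]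
    exact List.mem_map_of_mem hz
  · intro hz
    rw [← liftW_support G D hD X p hp ha hb] at hz
    obtain ⟨w, hw, hwz⟩ := List.mem_map.mp hz
    rwa [Subtype.val_injective hwz] at hw

lemma liftW_mem_edges (G D : SimpleGraph V) (hD : ∀ ⦃x y : V⦄, D.Adj x y → G.Adj x y)
    {X : Set V} {a b : V} (p : D.Walk a b) (hp : ∀ x ∈ p.support, x ∈ X)
    (ha : a ∈ X) (hb : b ∈ X) (e : Sym2 X) :
    e ∈ (liftW G D hD X p hp ha hb).edges ↔ Sym2.map Subtype.val e ∈ p.edges := by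
  constructor
  · intro he
    rw [← liftW_edges G D hD X p hp ha hb]
    exact List.mem_map_of_mem he
  · intro he
    rw [← liftW_edges G D hD X p hp ha hb] at he
    obtain ⟨w, hw, hwz⟩ := List.mem_map.mp he
    rwa [Sym2.map.injective Subtype.val_injective hwz] at hw

lemma liftW_isPath (G D : SimpleGraph V) (hD : ∀ ⦃x y : V⦄, D.Adj x y → G.Adj x y)
    {X : Set V} {a b : V} (p : D.Walk a b) (hp : ∀ x ∈ p.support, x ∈ X)
    (ha : a ∈ X) (hb : b ∈ X) (h : p.IsPath) :
    (liftW G D hD X p hp ha hb).IsPath := by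
  rw [Walk.isPath_def] at h ⊢
  apply List.Nodup.of_map Subtype.val
  rw [liftW_support G D hD X p hp ha hb]
  exact h

/-- Every vertex of a walk lies in `S` provided each edge's first endpoint
lies in `S` and the final endpoint lies in `S`. -/
lemma support_subset {D : SimpleGraph V} {S : Set V}
    (hDS : ∀ x y, D.Adj x y → x ∈ S) :
    ∀ {a b : V} (q : D.Walk a b), b ∈ S → ∀ x ∈ q.support, x ∈ S := by
  intro a b q
  induction q with
  | nil => intro hb x hx; simp only [Walk.support_nil, List.mem_singleton] at hx; subst hx; exact hb
  | cons h q ih =>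
    intro hb x hx
    simp only [Walk.support_cons, List.mem_cons] at hx
    rcases hx with rfl | hx
    · exact hDS _ _ h
    · exact ih hb x hx

end ThetaAux
namespace ThetaAux

lemma memK (u v x : V) : x ∈ ({u, v}ᶜ : Set V) ↔ (x ≠ u ∧ x ≠ v) := by
  simp [Set.mem_compl_iff, Set.mem_insert_iff, not_or]

def inComp (G : SimpleGraph V) (u v : V)
    (C : (G.induce ({u, v}ᶜ : Set V)).ConnectedComponent) (x : V) : Prop :=
  ∃ hx : x ∈ ({u, v}ᶜ : Set V),
    (G.induce ({u, v}ᶜ : Set V)).connectedComponentMk ⟨x, hx⟩ = C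

def SC (G : SimpleGraph V) (u v : V)
    (C : (G.induce ({u, v}ᶜ : Set V)).ConnectedComponent) : Set V :=
  {x | x = u ∨ x = v ∨ inComp G u v C x}

lemma mem_SC (G : SimpleGraph V) (u v : V)
    (C : (G.induce ({u, v}ᶜ : Set V)).ConnectedComponent) (x : V) :
    x ∈ SC G u v C ↔ x = u ∨ x = v ∨ inComp G u v C x := Iff.rfl

def DC (G : SimpleGraph V) (u v : V)
    (C : (G.induce ({u, v}ᶜ : Set V)).ConnectedComponent) : SimpleGraph V where
  Adj x y := G.Adj x y ∧ x ∈ SC G u v C ∧ y ∈ SC G u v C ∧ s(x, y) ≠ s(u, v)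
  symm := by
    constructor
    rintro x y ⟨h1, h2, h3, h4⟩
    exact ⟨h1.symm, h3, h2, by rwa [Sym2.eq_swap]⟩
  loopless := by
    constructor
    rintro x ⟨h, -⟩
    exact h.ne rfl

lemma inComp_unique (G : SimpleGraph V) (u v : V)
    (C C' : (G.induce ({u, v}ᶜ : Set V)).ConnectedComponent) (x : V)
    (h : inComp G u v C x) (h' : inComp G u v C' x) : C = C' := by
  obtain ⟨h1, e1⟩ := h
  obtain ⟨h2, e2⟩ := h'
  rw [← e1, ← e2]

end ThetaAux
namespace ThetaAux
lemma DC_adj (G : SimpleGraph V) (u v : V)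
    (C : (G.induce ({u, v}ᶜ : Set V)).ConnectedComponent) (x y : V) :
    (DC G u v C).Adj x y ↔
      (G.Adj x y ∧ x ∈ SC G u v C ∧ y ∈ SC G u v C ∧ s(x, y) ≠ s(u, v)) := Iff.rfl
end ThetaAux
/-- In a 2-connected graph with no induced theta or theta⁺,
deleting a 2-cutset leaves exactly two connected components. -/
theorem two_cutset_two_components {V : Type u} [Fintype V] (G : SimpleGraph V)
    (h2 : TwoConnected G)
    (hth : ∀ X : Set V, ¬ IsTheta (G.induce X) ∧ ¬ IsThetaPlus (G.induce X))
    (u v : V) (huv : u ≠ v) (hcut : IsCutset G {u, v}) :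
    Nat.card (G.induce ({u, v}ᶜ : Set V)).ConnectedComponent = 2 := by
  classical
  obtain ⟨hcard, hGconn, hdel⟩ := h2
  -- STEP 1: both u and v have a neighbour in each component of G - {u,v}
  have nbr : ∀ (w w' : V), ((w = u ∧ w' = v) ∨ (w = v ∧ w' = u)) →
      ∀ C : (G.induce ({u, v}ᶜ : Set V)).ConnectedComponent,
        ∃ c, ThetaAux.inComp G u v C c ∧ G.Adj w c := by
    intro w w' hww C
    induction C using SimpleGraph.ConnectedComponent.ind with
    | _ r =>
    have hrne := (ThetaAux.memK u v r.1).mp r.2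
    have hwne : w ≠ w' := by
      rcases hww with ⟨rfl, rfl⟩ | ⟨rfl, rfl⟩
      · exact huv
      · exact huv.symm
    have hwmem : w ∈ ({w'}ᶜ : Set V) := by simpa using hwne
    have hrmem : r.1 ∈ ({w'}ᶜ : Set V) := by
      simp only [Set.mem_compl_iff, Set.mem_singleton_iff]
      rcases hww with ⟨rfl, rfl⟩ | ⟨rfl, rfl⟩
      · exact hrne.2
      · exact hrne.1
    obtain ⟨p⟩ := (hdel w').preconnected ⟨r.1, hrmem⟩ ⟨w, hwmem⟩
    have claim : ∀ (x z : ({w'}ᶜ : Set V)) (q : (G.induce ({w'}ᶜ : Set V)).Walk x z),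
        z.1 = w →
        ThetaAux.inComp G u v ((G.induce ({u,v}ᶜ : Set V)).connectedComponentMk r) x.1 →
        ∃ c, ThetaAux.inComp G u v
          ((G.induce ({u,v}ᶜ : Set V)).connectedComponentMk r) c ∧ G.Adj w c := by
      intro x z q
      induction q with
      | nil =>
        intro hz hx
        exfalso
        obtain ⟨hxK, -⟩ := hx
        have hne := (ThetaAux.memK u v _).mp hxK
        rcases hww with ⟨rfl, -⟩ | ⟨rfl, -⟩
        · exact hne.1 hz
        · exact hne.2 hz
      | @cons x y z h q ih =>
        intro hz hx
        by_cases hyw : y.1 = w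
        · refine ⟨x.1, hx, ?_⟩
          have hGxy : G.Adj x.1 y.1 := h
          rw [hyw] at hGxy
          exact hGxy.symm
        · have hy2 : y.1 ≠ w' := y.2
          have hyK : y.1 ∈ ({u, v}ᶜ : Set V) := by
            rw [ThetaAux.memK]
            rcases hww with ⟨rfl, rfl⟩ | ⟨rfl, rfl⟩
            · exact ⟨hyw, hy2⟩
            · exact ⟨hy2, hyw⟩
          refine ih hz ?_
          obtain ⟨hxK, hxC⟩ := hx
          refine ⟨hyK, ?_⟩
          rw [← hxC]
          refine (SimpleGraph.ConnectedComponent.eq).mpr ?_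
          refine SimpleGraph.Adj.reachable ?_
          show (G.induce ({u,v}ᶜ : Set V)).Adj ⟨y.1, hyK⟩ ⟨x.1, hxK⟩
          exact (h : G.Adj x.1 y.1).symm
    exact claim ⟨r.1, hrmem⟩ ⟨w, hwmem⟩ p rfl ⟨r.2, rfl⟩
  -- STEP 2: u and v are connected through each component
  have hreach : ∀ C, (ThetaAux.DC G u v C).Reachable u v := by
    intro C
    obtain ⟨cu, hcu, hucu⟩ := nbr u v (Or.inl ⟨rfl, rfl⟩) C
    obtain ⟨cv, hcv, hvcv⟩ := nbr v u (Or.inr ⟨rfl, rfl⟩) C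
    obtain ⟨hcuK, hcuC⟩ := hcu
    obtain ⟨hcvK, hcvC⟩ := hcv
    have hmid : ∀ (x z : ({u, v}ᶜ : Set V)) (q : (G.induce ({u,v}ᶜ : Set V)).Walk x z),
        (G.induce ({u,v}ᶜ : Set V)).connectedComponentMk x = C →
        (ThetaAux.DC G u v C).Reachable x.1 z.1 := by
      intro x z q
      induction q with
      | nil => intro _; exact SimpleGraph.Reachable.refl _
      | @cons x y z h q ih =>
        intro hx
        have hyC : (G.induce ({u,v}ᶜ : Set V)).connectedComponentMk y = C := by
          rw [← hx]
          exact (SimpleGraph.ConnectedComponent.eq).mpr (SimpleGraph.Adj.reachable h).symm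
        refine SimpleGraph.Reachable.trans ?_ (ih hyC)
        refine SimpleGraph.Adj.reachable ?_
        refine ⟨(h : G.Adj x.1 y.1), Or.inr (Or.inr ⟨x.2, hx⟩),
          Or.inr (Or.inr ⟨y.2, hyC⟩), ?_⟩
        intro hcontra
        rcases Sym2.eq_iff.mp hcontra with ⟨h1, -⟩ | ⟨h1, -⟩
        · exact ((ThetaAux.memK u v x.1).mp x.2).1 h1
        · exact ((ThetaAux.memK u v x.1).mp x.2).2 h1
    have h1 : (ThetaAux.DC G u v C).Adj u cu := by
      refine ⟨hucu, Or.inl rfl, Or.inr (Or.inr ⟨hcuK, hcuC⟩), ?_⟩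
      intro hcontra
      rcases Sym2.eq_iff.mp hcontra with ⟨-, h2⟩ | ⟨h2, -⟩
      · exact ((ThetaAux.memK u v cu).mp hcuK).2 h2
      · exact huv h2
    have h2 : (ThetaAux.DC G u v C).Adj cv v := by
      refine ⟨hvcv.symm, Or.inr (Or.inr ⟨hcvK, hcvC⟩), Or.inr (Or.inl rfl), ?_⟩
      intro hcontra
      rcases Sym2.eq_iff.mp hcontra with ⟨h3, -⟩ | ⟨h3, -⟩
      · exact ((ThetaAux.memK u v cv).mp hcvK).1 h3
      · exact ((ThetaAux.memK u v cv).mp hcvK).2 h3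
    obtain ⟨q⟩ := SimpleGraph.ConnectedComponent.exact (hcuC.trans hcvC.symm)
    exact (h1.reachable).trans ((hmid ⟨cu, hcuK⟩ ⟨cv, hcvK⟩ q hcuC).trans h2.reachable)
  -- STEP 3: shortest u-v paths through each component
  have pathdata : ∀ C, ∃ p : (ThetaAux.DC G u v C).Walk u v,
      p.IsPath ∧ p.length = (ThetaAux.DC G u v C).dist u v ∧ 2 ≤ p.length ∧
      ∀ x ∈ p.support, x ∈ ThetaAux.SC G u v C := by
    intro C
    obtain ⟨p, hpath, hlen⟩ := (hreach C).exists_path_of_dist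
    refine ⟨p, hpath, hlen, ?_, ?_⟩
    · have h0 : p.length ≠ 0 := fun h => huv (SimpleGraph.Walk.eq_of_length_eq_zero h)
      have h1 : p.length ≠ 1 := by
        intro h
        exact (SimpleGraph.Walk.adj_of_length_eq_one h).2.2.2 rfl
      omega
    · intro x hx
      exact ThetaAux.support_subset (fun a b hab => ((ThetaAux.DC_adj G u v C a b).mp hab).2.1) p (Or.inr (Or.inl rfl)) x hx
  -- STEP 4: no three distinct components
  have nothree : ∀ C₁ C₂ C₃ : (G.induce ({u,v}ᶜ : Set V)).ConnectedComponent,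
      C₁ ≠ C₂ → C₁ ≠ C₃ → C₂ ≠ C₃ → False := by
    intro C₁ C₂ C₃ h12 h13 h23
    obtain ⟨p₁, hP₁, hL₁, h2L₁, hS₁⟩ := pathdata C₁
    obtain ⟨p₂, hP₂, hL₂, h2L₂, hS₂⟩ := pathdata C₂
    obtain ⟨p₃, hP₃, hL₃, h2L₃, hS₃⟩ := pathdata C₃
    set X : Set V := {x | x ∈ p₁.support ∨ x ∈ p₂.support ∨ x ∈ p₃.support} with hX
    have hp1 : ∀ x ∈ p₁.support, x ∈ X := fun x hx => Or.inl hx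
    have hp2 : ∀ x ∈ p₂.support, x ∈ X := fun x hx => Or.inr (Or.inl hx)
    have hp3 : ∀ x ∈ p₃.support, x ∈ X := fun x hx => Or.inr (Or.inr hx)
    have hu : u ∈ X := hp1 u p₁.start_mem_support
    have hv : v ∈ X := hp1 v p₁.end_mem_support
    have hab : (⟨u, hu⟩ : X) ≠ ⟨v, hv⟩ := fun h => huv (congrArg Subtype.val h)
    have hle : ∀ C, ∀ ⦃x y : V⦄, (ThetaAux.DC G u v C).Adj x y → G.Adj x y :=
      fun C x y h => h.1
    have getcomp : ∀ {C} (p : (ThetaAux.DC G u v C).Walk u v),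
        (∀ x ∈ p.support, x ∈ ThetaAux.SC G u v C) → ∀ {x : V},
        x ∈ p.support → x ≠ u → x ≠ v → ThetaAux.inComp G u v C x := by
      intro C p hsup x hx hxu hxv
      rcases (ThetaAux.mem_SC G u v C x).mp (hsup x hx) with h | h | h
      · exact absurd h hxu
      · exact absurd h hxv
      · exact h
    have huvin : ∀ {C : _} (p : (ThetaAux.DC G u v C).Walk u v) (w : V),
        w = u ∨ w = v → w ∈ p.support := by
      rintro C p w (rfl | rfl)
      · exact p.start_mem_support
      · exact p.end_mem_support
    have hcommon : ∀ x y, G.Adj x y → x ∈ X → y ∈ X →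
        (x ∈ p₁.support ∧ y ∈ p₁.support) ∨ (x ∈ p₂.support ∧ y ∈ p₂.support) ∨
        (x ∈ p₃.support ∧ y ∈ p₃.support) := by
      intro x y hadj hx hy
      replace hx : x ∈ p₁.support ∨ x ∈ p₂.support ∨ x ∈ p₃.support := hx
      replace hy : y ∈ p₁.support ∨ y ∈ p₂.support ∨ y ∈ p₃.support := hy
      by_cases hxuv : x = u ∨ x = v
      · rcases hy with hy | hy | hy
        · exact Or.inl ⟨huvin p₁ x hxuv, hy⟩
        · exact Or.inr (Or.inl ⟨huvin p₂ x hxuv, hy⟩)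
        · exact Or.inr (Or.inr ⟨huvin p₃ x hxuv, hy⟩)
      · by_cases hyuv : y = u ∨ y = v
        · rcases hx with hx | hx | hx
          · exact Or.inl ⟨hx, huvin p₁ y hyuv⟩
          · exact Or.inr (Or.inl ⟨hx, huvin p₂ y hyuv⟩)
          · exact Or.inr (Or.inr ⟨hx, huvin p₃ y hyuv⟩)
        · push_neg at hxuv hyuv
          have hxK : x ∈ ({u,v}ᶜ : Set V) := (ThetaAux.memK u v x).mpr hxuv
          have hyK : y ∈ ({u,v}ᶜ : Set V) := (ThetaAux.memK u v y).mpr hyuv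
          have hmkeq : (G.induce ({u,v}ᶜ : Set V)).connectedComponentMk ⟨x, hxK⟩ =
              (G.induce ({u,v}ᶜ : Set V)).connectedComponentMk ⟨y, hyK⟩ :=
            (SimpleGraph.ConnectedComponent.eq).mpr
              (SimpleGraph.Adj.reachable (by exact hadj))
          have comeq : ∀ {C C' : _}, ThetaAux.inComp G u v C x →
              ThetaAux.inComp G u v C' y → C = C' := by
            rintro C C' ⟨hk1, hc1⟩ ⟨hk2, hc2⟩
            rw [← hc1, ← hc2]
            exact hmkeq
          rcases hx with hx | hx | hx <;> rcases hy with hy | hy | hy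
          · exact Or.inl ⟨hx, hy⟩
          · exact absurd (comeq (getcomp p₁ hS₁ hx hxuv.1 hxuv.2)
              (getcomp p₂ hS₂ hy hyuv.1 hyuv.2)) h12
          · exact absurd (comeq (getcomp p₁ hS₁ hx hxuv.1 hxuv.2)
              (getcomp p₃ hS₃ hy hyuv.1 hyuv.2)) h13
          · exact absurd (comeq (getcomp p₂ hS₂ hx hxuv.1 hxuv.2)
              (getcomp p₁ hS₁ hy hyuv.1 hyuv.2)) h12.symm
          · exact Or.inr (Or.inl ⟨hx, hy⟩)
          · exact absurd (comeq (getcomp p₂ hS₂ hx hxuv.1 hxuv.2)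
              (getcomp p₃ hS₃ hy hyuv.1 hyuv.2)) h23
          · exact absurd (comeq (getcomp p₃ hS₃ hx hxuv.1 hxuv.2)
              (getcomp p₁ hS₁ hy hyuv.1 hyuv.2)) h13.symm
          · exact absurd (comeq (getcomp p₃ hS₃ hx hxuv.1 hxuv.2)
              (getcomp p₂ hS₂ hy hyuv.1 hyuv.2)) h23.symm
          · exact Or.inr (Or.inr ⟨hx, hy⟩)
    have mainC : ∀ (C) (p : (ThetaAux.DC G u v C).Walk u v),
        p.length = (ThetaAux.DC G u v C).dist u v →
        (∀ x ∈ p.support, x ∈ ThetaAux.SC G u v C) →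
        ∀ x y, G.Adj x y → x ∈ p.support → y ∈ p.support →
          s(x, y) = s(u, v) ∨ s(x, y) ∈ p.edges := by
      intro C p hlen hsup x y hadj hx hy
      by_cases h : s(x, y) = s(u, v)
      · exact Or.inl h
      · exact Or.inr (ThetaAux.chord p hlen x y hx hy ⟨hadj, hsup x hx, hsup y hy, h⟩)
    have hedge : ∀ x y : V, G.Adj x y → x ∈ X → y ∈ X →
        s(x,y) = s(u,v) ∨ s(x,y) ∈ p₁.edges ∨ s(x,y) ∈ p₂.edges ∨ s(x,y) ∈ p₃.edges := by
      intro x y hadj hx hy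
      rcases hcommon x y hadj hx hy with ⟨e1, e2⟩ | ⟨e1, e2⟩ | ⟨e1, e2⟩
      · rcases mainC C₁ p₁ hL₁ hS₁ x y hadj e1 e2 with h | h
        · exact Or.inl h
        · exact Or.inr (Or.inl h)
      · rcases mainC C₂ p₂ hL₂ hS₂ x y hadj e1 e2 with h | h
        · exact Or.inl h
        · exact Or.inr (Or.inr (Or.inl h))
      · rcases mainC C₃ p₃ hL₃ hS₃ x y hadj e1 e2 with h | h
        · exact Or.inl h
        · exact Or.inr (Or.inr (Or.inr h))
    have hdisj : ∀ {C C' : _}, C ≠ C' → ∀ {x : V},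
        x ∈ ThetaAux.SC G u v C → x ∈ ThetaAux.SC G u v C' → x = u ∨ x = v := by
      intro C C' hne x hx hx'
      rcases (ThetaAux.mem_SC G u v C x).mp hx with h | h | h
      · exact Or.inl h
      · exact Or.inr h
      · rcases (ThetaAux.mem_SC G u v C' x).mp hx' with h' | h' | h'
        · exact Or.inl h'
        · exact Or.inr h'
        · exact absurd (ThetaAux.inComp_unique G u v C C' x h h') hne
    -- interchangeable pieces for the final construction
    have hint : ∀ {C C' : _} (hne : C ≠ C') (p : (ThetaAux.DC G u v C).Walk u v)
        (p' : (ThetaAux.DC G u v C').Walk u v)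
        (hs : ∀ x ∈ p.support, x ∈ ThetaAux.SC G u v C)
        (hs' : ∀ x ∈ p'.support, x ∈ ThetaAux.SC G u v C')
        (hq : ∀ x ∈ p.support, x ∈ X) (hq' : ∀ x ∈ p'.support, x ∈ X)
        (z : X), z ∈ (ThetaAux.liftW G _ (hle C) X p hq hu hv).support →
          z ∈ (ThetaAux.liftW G _ (hle C') X p' hq' hu hv).support →
          z = (⟨u, hu⟩ : X) ∨ z = (⟨v, hv⟩ : X) := by
      intro C C' hne p p' hs hs' hq hq' z hz1 hz2
      have m1 := (ThetaAux.liftW_mem_support G _ (hle C) p hq hu hv z).mp hz1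
      have m2 := (ThetaAux.liftW_mem_support G _ (hle C') p' hq' hu hv z).mp hz2
      rcases hdisj hne (hs z.1 m1) (hs' z.1 m2) with h | h
      · exact Or.inl (Subtype.ext h)
      · exact Or.inr (Subtype.ext h)
    have hcover : ∀ z : X, z ∈ (ThetaAux.liftW G _ (hle C₁) X p₁ hp1 hu hv).support ∨
        z ∈ (ThetaAux.liftW G _ (hle C₂) X p₂ hp2 hu hv).support ∨
        z ∈ (ThetaAux.liftW G _ (hle C₃) X p₃ hp3 hu hv).support := by
      intro z
      have hz : z.1 ∈ p₁.support ∨ z.1 ∈ p₂.support ∨ z.1 ∈ p₃.support := z.2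
      rcases hz with h | h | h
      · exact Or.inl ((ThetaAux.liftW_mem_support G _ (hle C₁) p₁ hp1 hu hv z).mpr h)
      · exact Or.inr (Or.inl ((ThetaAux.liftW_mem_support G _ (hle C₂) p₂ hp2 hu hv z).mpr h))
      · exact Or.inr (Or.inr ((ThetaAux.liftW_mem_support G _ (hle C₃) p₃ hp3 hu hv z).mpr h))
    by_cases hGuv : G.Adj u v
    · refine (hth X).2 ⟨⟨u, hu⟩, ⟨v, hv⟩,
        ThetaAux.liftW G _ (hle C₁) X p₁ hp1 hu hv,
        ThetaAux.liftW G _ (hle C₂) X p₂ hp2 hu hv,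
        ThetaAux.liftW G _ (hle C₃) X p₃ hp3 hu hv,
        hab, ?_, ?_, ?_, ?_, ?_, ?_, ?_,
        hint h12 p₁ p₂ hS₁ hS₂ hp1 hp2,
        hint h13 p₁ p₃ hS₁ hS₃ hp1 hp3,
        hint h23 p₂ p₃ hS₂ hS₃ hp2 hp3,
        hcover, ?_⟩
      · exact hGuv
      · exact ThetaAux.liftW_isPath G _ (hle C₁) p₁ hp1 hu hv hP₁
      · exact ThetaAux.liftW_isPath G _ (hle C₂) p₂ hp2 hu hv hP₂
      · exact ThetaAux.liftW_isPath G _ (hle C₃) p₃ hp3 hu hv hP₃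
      · rw [ThetaAux.liftW_length]; exact h2L₁
      · rw [ThetaAux.liftW_length]; exact h2L₂
      · rw [ThetaAux.liftW_length]; exact h2L₃
      · intro e he
        revert he
        refine Sym2.ind ?_ e
        intro x y he
        have hadj : G.Adj x.1 y.1 := he
        rcases hedge x.1 y.1 hadj x.2 y.2 with h | h | h | h
        · left
          apply Sym2.map.injective Subtype.val_injective
          simpa [Sym2.map_pair_eq] using h
        · exact Or.inr (Or.inl ((ThetaAux.liftW_mem_edges G _ (hle C₁) p₁ hp1 hu hv _).mpr
            (by simpa [Sym2.map_pair_eq] using h)))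
        · exact Or.inr (Or.inr (Or.inl ((ThetaAux.liftW_mem_edges G _ (hle C₂) p₂ hp2 hu hv _).mpr
            (by simpa [Sym2.map_pair_eq] using h))))
        · exact Or.inr (Or.inr (Or.inr ((ThetaAux.liftW_mem_edges G _ (hle C₃) p₃ hp3 hu hv _).mpr
            (by simpa [Sym2.map_pair_eq] using h))))
    · refine (hth X).1 ⟨⟨u, hu⟩, ⟨v, hv⟩,
        ThetaAux.liftW G _ (hle C₁) X p₁ hp1 hu hv,
        ThetaAux.liftW G _ (hle C₂) X p₂ hp2 hu hv,
        ThetaAux.liftW G _ (hle C₃) X p₃ hp3 hu hv,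
        hab, ?_, ?_, ?_, ?_, ?_, ?_,
        hint h12 p₁ p₂ hS₁ hS₂ hp1 hp2,
        hint h13 p₁ p₃ hS₁ hS₃ hp1 hp3,
        hint h23 p₂ p₃ hS₂ hS₃ hp2 hp3,
        hcover, ?_⟩
      · exact ThetaAux.liftW_isPath G _ (hle C₁) p₁ hp1 hu hv hP₁
      · exact ThetaAux.liftW_isPath G _ (hle C₂) p₂ hp2 hu hv hP₂
      · exact ThetaAux.liftW_isPath G _ (hle C₃) p₃ hp3 hu hv hP₃
      · rw [ThetaAux.liftW_length]; exact h2L₁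
      · rw [ThetaAux.liftW_length]; exact h2L₂
      · rw [ThetaAux.liftW_length]; exact h2L₃
      · intro e he
        revert he
        refine Sym2.ind ?_ e
        intro x y he
        have hadj : G.Adj x.1 y.1 := he
        rcases hedge x.1 y.1 hadj x.2 y.2 with h | h | h | h
        · exfalso
          rcases Sym2.eq_iff.mp h with ⟨h1, h2⟩ | ⟨h1, h2⟩
          · exact hGuv (by rw [← h1, ← h2]; exact hadj)
          · exact hGuv (by rw [← h2, ← h1]; exact hadj.symm)
        · exact Or.inl ((ThetaAux.liftW_mem_edges G _ (hle C₁) p₁ hp1 hu hv _).mpr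
            (by simpa [Sym2.map_pair_eq] using h))
        · exact Or.inr (Or.inl ((ThetaAux.liftW_mem_edges G _ (hle C₂) p₂ hp2 hu hv _).mpr
            (by simpa [Sym2.map_pair_eq] using h)))
        · exact Or.inr (Or.inr ((ThetaAux.liftW_mem_edges G _ (hle C₃) p₃ hp3 hu hv _).mpr
            (by simpa [Sym2.map_pair_eq] using h)))
  -- STEP 5: conclude
  have hcut' : ¬ (G.induce ({u, v}ᶜ : Set V)).Preconnected := hcut
  unfold SimpleGraph.Preconnected at hcut'
  push_neg at hcut'
  obtain ⟨x, y, hxy⟩ := hcut'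
  rw [Nat.card_eq_two_iff]
  refine ⟨(G.induce ({u,v}ᶜ : Set V)).connectedComponentMk x,
          (G.induce ({u,v}ᶜ : Set V)).connectedComponentMk y,
          fun h => hxy (SimpleGraph.ConnectedComponent.exact h), ?_⟩
  apply Set.eq_univ_of_forall
  intro C
  simp only [Set.mem_insert_iff, Set.mem_singleton_iff]
  by_contra hC
  push_neg at hC
  exact nothree C _ _ hC.1 hC.2 (fun h => hxy (SimpleGraph.ConnectedComponent.exact h))
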